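/- Let Σ be a symmetric positive definite q×q real matrix, μ ∈ ℝ^q, and let g(x) = (2π)^{−q/2} (det Σ)^{−1/2} exp(−(1/2)(x − μ)ᵀ Σ⁻¹ (x − μ)) be the corresponding multivariate normal density. Let R ⊆ ℝ^q be a Borel set with Z = ∫_R g(x) dx > 0, and let p = (1/Z) g·1_R be the normalized restriction of g to R. Let μ^{TN} = ∫_R x p(x) dx and Σ^{TN} = ∫_R (x − μ^{TN})(x − μ^{TN})ᵀ p(x) dx be the mean and covariance of p, and set d = μ^{TN} − μ. Then the differential entropy of p satisfies −∫_R p(x) log p(x) dx = (1/2) log((2π)^q det Σ) + (1/2) Tr(Σ⁻¹ (Σ^{TN} + d dᵀ)) + log Z. -/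

import Mathlib

/-!
On `R` we have `log p = log g - log Z`, and `log g` is `-½ log((2π)^q det Σ) - ½ Q` with
`Q x = (x - μ)ᵀ Σ⁻¹ (x - μ)`. Hence the entropy equals `½ log((2π)^q det Σ) + log Z + ½ E_p[Q]`.
Expanding `Q` in coordinates gives `E_p[Q] = Tr(Σ⁻¹ E_p[(x - μ)(x - μ)ᵀ])`, and the second moment
about `μ` is `Σ^{TN} + d dᵀ` (covariance plus squared bias). All these moments are finite because
positive definiteness dominates the Gaussian by a product of one-dimensional Gaussians, against
which every polynomial is integrable.
-/

open MeasureTheory Real Set Matrix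

/-- The multivariate normal density with mean `m` and covariance `S`:
`g(z) = (2π)^{−q/2} (det S)^{−1/2} exp(−(1/2)(z − m)ᵀ S⁻¹ (z − m))`. -/
noncomputable def gaussDensity {ι : Type*} [Fintype ι] [DecidableEq ι]
    (m : ι → ℝ) (S : Matrix ι ι ℝ) (z : ι → ℝ) : ℝ :=
  (2 * π) ^ (-(Fintype.card ι : ℝ) / 2) * (Real.sqrt S.det)⁻¹ *
    Real.exp (-(1 / 2) * ((z - m) ⬝ᵥ (S⁻¹ *ᵥ (z - m))))

lemma integrable_pow_mul_exp_neg_mul_sq {b : ℝ} (hb : 0 < b) (k : ℕ) :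
    Integrable fun t : ℝ => t ^ k * exp (-b * t ^ 2) := by
  simpa [Real.rpow_natCast] using
    integrable_rpow_mul_exp_neg_mul_sq hb (s := k) (by linarith [k.cast_nonneg (α := ℝ)])

namespace Matrix.PosDef

variable {n : Type*} [Fintype n] {A : Matrix n n ℝ}

lemma exists_pos_mul_dotProduct_self_le (hA : A.PosDef) :
    ∃ c, 0 < c ∧ ∀ y : n → ℝ, c * (y ⬝ᵥ y) ≤ y ⬝ᵥ A *ᵥ y := by
  have hQ : ∀ y : n → ℝ, y ≠ 0 → 0 < y ⬝ᵥ A *ᵥ y := fun y hy => by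
    simpa using hA.dotProduct_mulVec_pos hy
  have hN : ∀ y : n → ℝ, y ≠ 0 → 0 < y ⬝ᵥ y := fun y hy => by
    simpa using dotProduct_star_self_pos_iff.2 hy
  rcases isEmpty_or_nonempty n with hn | hn
  · exact ⟨1, one_pos, fun y => by simp [Subsingleton.elim y 0]⟩
  -- The Rayleigh quotient is scale invariant: its minimum on the unit sphere bounds it everywhere.
  set rayleigh := fun y : n → ℝ => (y ⬝ᵥ A *ᵥ y) / (y ⬝ᵥ y)
  have hcont : ContinuousOn rayleigh (Metric.sphere 0 1) := by
    refine ContinuousOn.div (by fun_prop) (by fun_prop) fun y hy => (hN y ?_).ne'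
    exact ne_zero_of_mem_unit_sphere ⟨y, hy⟩
  obtain ⟨u, hu, hmin⟩ := (isCompact_sphere (0 : n → ℝ) 1).exists_isMinOn
    (NormedSpace.sphere_nonempty.2 zero_le_one) hcont
  have hu0 : u ≠ 0 := ne_zero_of_mem_unit_sphere ⟨u, hu⟩
  refine ⟨rayleigh u, div_pos (hQ u hu0) (hN u hu0), fun y => ?_⟩
  rcases eq_or_ne y 0 with rfl | hy
  · simp
  have hscale : rayleigh (‖y‖⁻¹ • y) = rayleigh y := by
    have : ‖y‖ ≠ 0 := norm_ne_zero_iff.2 hy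
    simp only [rayleigh, mulVec_smul, dotProduct_smul, smul_dotProduct, smul_eq_mul]
    field_simp
  have hmem : ‖y‖⁻¹ • y ∈ Metric.sphere (0 : n → ℝ) 1 := by
    simp [norm_smul, hy]
  rw [← le_div_iff₀ (hN y hy)]
  exact (hmin hmem).trans_eq hscale

lemma integrable_prod_pow_mul_exp_neg_dotProduct_mulVec (hA : A.PosDef) (d : n → ℕ) :
    Integrable fun y : n → ℝ => (∏ k, y k ^ d k) * exp (-(y ⬝ᵥ A *ᵥ y)) := by
  obtain ⟨c, hc, hcA⟩ := hA.exists_pos_mul_dotProduct_self_le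
  have hdom : Integrable fun y : n → ℝ => ∏ k, (y k ^ d k * exp (-c * y k ^ 2)) :=
    Integrable.fintype_prod (f := fun k t => t ^ d k * exp (-c * t ^ 2))
      fun k => integrable_pow_mul_exp_neg_mul_sq hc (d k)
  refine hdom.norm.mono' (by fun_prop) (ae_of_all _ fun y => ?_)
  rw [Finset.prod_mul_distrib, norm_mul, norm_mul, ← exp_sum]
  gcongr
  simp only [norm_eq_abs, abs_exp, exp_le_exp, neg_mul, Finset.sum_neg_distrib, neg_le_neg_iff,
    ← Finset.mul_sum]
  simpa [dotProduct, sq] using hcA y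

lemma integrable_eval_mul_exp_neg_dotProduct_mulVec (hA : A.PosDef) (P : MvPolynomial n ℝ) :
    Integrable fun y => MvPolynomial.eval y P * exp (-(y ⬝ᵥ A *ᵥ y)) := by
  simp_rw [MvPolynomial.eval_eq', Finset.sum_mul, mul_assoc]
  exact integrable_finsetSum _ fun d _ =>
    (hA.integrable_prod_pow_mul_exp_neg_dotProduct_mulVec d).const_mul _

end Matrix.PosDef

lemma MvPolynomial.eval_bind₁_X_add_C {n : Type*} (m y : n → ℝ) (P : MvPolynomial n ℝ) :
    eval y (bind₁ (fun i => X i + C (m i)) P) = eval (y + m) P := by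
  rw [eval, eval₂Hom_bind₁]
  simp [← Pi.add_def]

section gaussDensity

variable {ι : Type*} [Fintype ι] [DecidableEq ι] {S : Matrix ι ι ℝ}

lemma gaussDensity_eq_mul_exp (m z : ι → ℝ) :
    gaussDensity m S z = (2 * π) ^ (-(Fintype.card ι : ℝ) / 2) * (Real.sqrt S.det)⁻¹ *
      exp (-((z - m) ⬝ᵥ ((1 / 2 : ℝ) • S⁻¹) *ᵥ (z - m))) := by
  simp [gaussDensity, smul_mulVec, neg_mul]

lemma integrable_eval_mul_gaussDensity (hS : S.PosDef) (m : ι → ℝ) (P : MvPolynomial ι ℝ) :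
    Integrable fun x => MvPolynomial.eval x P * gaussDensity m S x := by
  have hA : ((1 / 2 : ℝ) • S⁻¹).PosDef := hS.inv.smul (by norm_num)
  have h := (hA.integrable_eval_mul_exp_neg_dotProduct_mulVec
    (MvPolynomial.bind₁ (fun i => .X i + .C (m i)) P)).comp_sub_right m
  simp_rw [MvPolynomial.eval_bind₁_X_add_C, sub_add_cancel] at h
  convert h.const_mul ((2 * π) ^ (-(Fintype.card ι : ℝ) / 2) * (Real.sqrt S.det)⁻¹) using 2
  rw [gaussDensity_eq_mul_exp]
  ring

lemma gaussDensity_pos (hS : S.PosDef) (m z : ι → ℝ) : 0 < gaussDensity m S z := by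
  have := hS.det_pos
  unfold gaussDensity
  positivity

lemma log_gaussDensity (hS : S.PosDef) (m z : ι → ℝ) :
    log (gaussDensity m S z) = -(1 / 2) * log ((2 * π) ^ Fintype.card ι * S.det)
      - (1 / 2) * ((z - m) ⬝ᵥ S⁻¹ *ᵥ (z - m)) := by
  have hdet := hS.det_pos
  rw [gaussDensity, log_mul (by positivity) (by positivity),
    log_mul (by positivity) (by positivity), log_rpow (by positivity), log_inv, log_sqrt hdet.le,
    log_exp, log_mul (by positivity) hdet.ne', log_pow]
  ring

end gaussDensity

section WeightedMoments

variable {α : Type*} [MeasurableSpace α] {ν : Measure α} {p : α → ℝ}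

lemma integral_sub_mul_sub_mul {f g : α → ℝ} (hp1 : ∫ x, p x ∂ν = 1) (hp : Integrable p ν)
    (hf : Integrable (fun x => f x * p x) ν) (hg : Integrable (fun x => g x * p x) ν)
    (hfg : Integrable (fun x => f x * g x * p x) ν) (a b : ℝ) :
    ∫ x, (f x - a) * (g x - b) * p x ∂ν =
      ∫ x, f x * g x * p x ∂ν - a * ∫ x, g x * p x ∂ν - b * ∫ x, f x * p x ∂ν + a * b := by
  have hfg_a : Integrable (fun x => f x * g x * p x - a * (g x * p x)) ν := hfg.sub (hg.const_mul a)
  have hfg_ab : Integrable (fun x => f x * g x * p x - a * (g x * p x) - b * (f x * p x)) ν :=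
    hfg_a.sub (hf.const_mul b)
  calc ∫ x, (f x - a) * (g x - b) * p x ∂ν
      = ∫ x, f x * g x * p x - a * (g x * p x) - b * (f x * p x) + a * b * p x ∂ν := by
        congr 1; funext x; ring
    _ = _ := by
        rw [integral_add hfg_ab (hp.const_mul _), integral_sub hfg_a (hf.const_mul b),
          integral_sub hfg (hg.const_mul a), integral_const_mul, integral_const_mul,
          integral_const_mul, hp1, mul_one]

lemma integral_sub_mul_sub_mul_eq_add {f g : α → ℝ} (hp1 : ∫ x, p x ∂ν = 1)
    (hp : Integrable p ν) (hf : Integrable (fun x => f x * p x) ν)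
    (hg : Integrable (fun x => g x * p x) ν) (hfg : Integrable (fun x => f x * g x * p x) ν)
    (a b : ℝ) :
    ∫ x, (f x - a) * (g x - b) * p x ∂ν =
      ∫ x, (f x - ∫ y, f y * p y ∂ν) * (g x - ∫ y, g y * p y ∂ν) * p x ∂ν +
        (∫ y, f y * p y ∂ν - a) * (∫ y, g y * p y ∂ν - b) := by
  simp only [integral_sub_mul_sub_mul hp1 hp hf hg hfg]
  ring

variable {n : Type*} [Fintype n]

lemma dotProduct_mulVec_mul_eq_sum (A : Matrix n n ℝ) (v : n → ℝ) (c : ℝ) :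
    (v ⬝ᵥ A *ᵥ v) * c = ∑ i, ∑ j, A i j * (v i * v j * c) := by
  simp only [dotProduct, mulVec, Finset.sum_mul, Finset.mul_sum]
  refine Finset.sum_congr rfl fun i _ => Finset.sum_congr rfl fun j _ => ?_
  ring

lemma integrable_dotProduct_mulVec_mul (A : Matrix n n ℝ) {y : α → n → ℝ}
    (h : ∀ i j, Integrable (fun x => y x i * y x j * p x) ν) :
    Integrable (fun x => (y x ⬝ᵥ A *ᵥ y x) * p x) ν := by
  simp_rw [dotProduct_mulVec_mul_eq_sum]
  exact integrable_finsetSum _ fun i _ => integrable_finsetSum _ fun j _ => (h i j).const_mul _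

lemma integral_dotProduct_mulVec_mul (A : Matrix n n ℝ) {y : α → n → ℝ}
    (h : ∀ i j, Integrable (fun x => y x i * y x j * p x) ν) :
    ∫ x, (y x ⬝ᵥ A *ᵥ y x) * p x ∂ν = trace (A * of fun i j => ∫ x, y x i * y x j * p x ∂ν) := by
  simp_rw [dotProduct_mulVec_mul_eq_sum]
  have hrow (i : n) : Integrable (fun x => ∑ j, A i j * (y x i * y x j * p x)) ν :=
    integrable_finsetSum _ fun j _ => (h i j).const_mul _
  refine (integral_finsetSum _ fun i _ => hrow i).trans (Finset.sum_congr rfl fun i _ => ?_)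
  refine (integral_finsetSum _ fun j _ => (h i j).const_mul _).trans
    (Finset.sum_congr rfl fun j _ => ?_)
  dsimp only [of_apply]
  rw [integral_const_mul]
  congr 2; funext x; ring

end WeightedMoments

section Truncation

variable {α : Type*} [MeasurableSpace α] {ν : Measure α} {R : Set α} {p G : α → ℝ} {Z : ℝ}

lemma setIntegral_mul_of_eqOn_div (hR : MeasurableSet R) (hp : EqOn p (fun x => G x / Z) R)
    (f : α → ℝ) : ∫ x in R, f x * p x ∂ν = (∫ x in R, f x * G x ∂ν) / Z := by
  rw [← integral_div]
  exact setIntegral_congr_fun hR fun x hx => by simp [hp hx, mul_div_assoc]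

lemma IntegrableOn.mul_of_eqOn_div {f : α → ℝ} (hR : MeasurableSet R)
    (hp : EqOn p (fun x => G x / Z) R) (h : IntegrableOn (fun x => f x * G x) R ν) :
    IntegrableOn (fun x => f x * p x) R ν :=
  IntegrableOn.congr_fun (h.div_const Z) (fun x hx => by simp [hp hx, mul_div_assoc]) hR

end Truncation

lemma neg_setIntegral_mul_log_of_eqOn_gaussDensity_div {ι : Type*} [Fintype ι] [DecidableEq ι]
    {S : Matrix ι ι ℝ} (hS : S.PosDef) {m : ι → ℝ} {R : Set (ι → ℝ)} (hR : MeasurableSet R)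
    {Z : ℝ} (hZ : 0 < Z) {p : (ι → ℝ) → ℝ} (hp : EqOn p (fun x => gaussDensity m S x / Z) R)
    (hp1 : ∫ x in R, p x = 1) (hpint : IntegrableOn p R)
    (hQ : IntegrableOn (fun x => ((x - m) ⬝ᵥ S⁻¹ *ᵥ (x - m)) * p x) R) :
    -(∫ x in R, p x * log (p x)) = (1 / 2) * log ((2 * π) ^ Fintype.card ι * S.det) +
      (1 / 2) * (∫ x in R, ((x - m) ⬝ᵥ S⁻¹ *ᵥ (x - m)) * p x) + log Z := by
  set L := log ((2 * π) ^ Fintype.card ι * S.det)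
  have hlog : EqOn (fun x => p x * log (p x)) (fun x =>
      -(L / 2 + log Z) * p x - (1 / 2) * (((x - m) ⬝ᵥ S⁻¹ *ᵥ (x - m)) * p x)) R := fun x hx => by
    simp only [hp hx, log_div (gaussDensity_pos hS m x).ne' hZ.ne', log_gaussDensity hS, L]
    ring
  rw [setIntegral_congr_fun hR hlog, integral_sub (hpint.const_mul _) (hQ.const_mul _),
    integral_const_mul, integral_const_mul, hp1]
  ring

/-- Differential entropy of a truncated multivariate Gaussian (Appendix D.3 of the paper):
with `Z = ∫_R g`, `p = (1/Z) g·1_R`, truncated mean `μ^{TN}`, truncated covariance `Σ^{TN}`, and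
`d = μ^{TN} − μ`, one has
`−∫_R p log p = (1/2) log((2π)^q det Σ) + (1/2) Tr(Σ⁻¹ (Σ^{TN} + d dᵀ)) + log Z`. -/
theorem truncated_multivariate_gaussian_entropy (q : ℕ)
    (Sig : Matrix (Fin q) (Fin q) ℝ) (hSig : Sig.PosDef) (μ : Fin q → ℝ)
    (R : Set (Fin q → ℝ)) (hR : MeasurableSet R)
    (Z : ℝ) (hZdef : Z = ∫ x in R, gaussDensity μ Sig x) (hZpos : 0 < Z)
    (p : (Fin q → ℝ) → ℝ) (hp : p = R.indicator (fun x => gaussDensity μ Sig x / Z))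
    (μTN : Fin q → ℝ) (hμTN : μTN = fun i => ∫ x in R, x i * p x)
    (SigTN : Matrix (Fin q) (Fin q) ℝ)
    (hSigTN : SigTN = Matrix.of fun i j => ∫ x in R, (x i - μTN i) * (x j - μTN j) * p x) :
    -(∫ x in R, p x * Real.log (p x)) =
      (1 / 2) * Real.log ((2 * π) ^ q * Sig.det) +
        (1 / 2) * Matrix.trace (Sig⁻¹ * (SigTN + Matrix.vecMulVec (μTN - μ) (μTN - μ))) +
          Real.log Z := by
  have hpR : EqOn p (fun x => gaussDensity μ Sig x / Z) R := fun x hx => by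
    rw [hp, indicator_of_mem hx]
  have hint (P : MvPolynomial (Fin q) ℝ) : IntegrableOn (fun x => MvPolynomial.eval x P * p x) R :=
    IntegrableOn.mul_of_eqOn_div hR hpR (integrable_eval_mul_gaussDensity hSig μ P).integrableOn
  have hp1 : ∫ x in R, p x = 1 := by
    simpa [← hZdef, hZpos.ne'] using setIntegral_mul_of_eqOn_div (ν := volume) hR hpR (fun _ => 1)
  have hmoment (i j : Fin q) : ∫ x in R, (x i - μ i) * (x j - μ j) * p x =
      SigTN i j + (μTN i - μ i) * (μTN j - μ j) := by
    rw [integral_sub_mul_sub_mul_eq_add hp1 (by simpa using (hint 1).integrable)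
      (by simpa using (hint (.X i)).integrable) (by simpa using (hint (.X j)).integrable)
      (by simpa using (hint (.X i * .X j)).integrable), hSigTN, hμTN, of_apply]
  have hcentered (i j : Fin q) :
      Integrable (fun x => (x - μ) i * (x - μ) j * p x) (volume.restrict R) := by
    simpa using (hint ((.X i - .C (μ i)) * (.X j - .C (μ j)))).integrable
  have hsecond : (of fun i j => ∫ x in R, (x - μ) i * (x - μ) j * p x) =
      SigTN + vecMulVec (μTN - μ) (μTN - μ) := by
    ext i j
    simp [hmoment, vecMulVec_apply]
  rw [neg_setIntegral_mul_log_of_eqOn_gaussDensity_div hSig hR hZpos hpR hp1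
    (by simpa using hint 1) (integrable_dotProduct_mulVec_mul _ hcentered),
    integral_dotProduct_mulVec_mul (y := fun x => x - μ) Sig⁻¹ hcentered, hsecond,
    Fintype.card_fin]
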